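/- Let ρ_{x^1}^k,...,ρ_{x^{N_D}}^k (k = 1..n_Q) be 2^m-dimensional density matrices, ξ ∈ ℝ, and define the kernel Σ(a,b) = c·Σ_{k=1}^{n_Q}(Tr(ρ_{x^a}^k ρ_{x^b}^k) − 2^{−m}) + ξ², where c = Tr(O²)/(2^{2m}−1) > 0. Then Σ is positive definite as an N_D×N_D matrix unless there exist real coefficients c_a, not all zero, with either (i) Σ_a c_a ρ_{x^a}^k = 0 for all k and Σ_a c_a = 0, or (ii) ξ = 0, Σ_a c_a ρ_{x^a}^k = I/2^m for all k and Σ_a c_a = 1. -/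

import Mathlib

open Matrix
open scoped ComplexOrder

/-!
Because every `ρ` has unit trace, `Tr(ρ_a ρ_b) - 2^{-m} = Tr(σ_a σ_b)` for the traceless parts
`σ = ρ - I/2^m`. Hence `Σ = c ∑_k Gram(σ^k) + ξ² 𝟙𝟙ᵀ`, whose quadratic form at a real vector `x`
is `c ∑_k ‖∑_a x_a σ^k_a‖²_F + ξ² (∑_a x_a)²`. It vanishes only if
`∑_a x_a ρ^k_a = (∑_a x_a)/2^m · I` for every `k` and `ξ ∑_a x_a = 0`; according as `∑_a x_a`
is zero or not, `x` or `x / ∑_a x_a` is then a coefficient vector of type (i) or (ii).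
-/

namespace Matrix

variable {ι κ n : Type*} [Fintype ι] [Fintype κ] [Fintype n]

namespace IsHermitian

variable {A : Matrix n n ℂ}

lemma trace_mul_self_nonneg (hA : A.IsHermitian) : 0 ≤ (A * A).trace := by
  simpa only [hA.eq] using (posSemidef_conjTranspose_mul_self A).trace_nonneg

lemma re_trace_mul_self_nonneg (hA : A.IsHermitian) : 0 ≤ (A * A).trace.re :=
  (Complex.nonneg_iff.mp hA.trace_mul_self_nonneg).1

lemma re_trace_mul_self_eq_zero_iff (hA : A.IsHermitian) : (A * A).trace.re = 0 ↔ A = 0 := by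
  rw [← trace_conjTranspose_mul_self_eq_zero_iff, hA.eq, Complex.ext_iff,
    ← (Complex.nonneg_iff.mp hA.trace_mul_self_nonneg).2]
  simp

end IsHermitian

omit [Fintype n] in
lemma isHermitian_sum_ofReal_smul (x : ι → ℝ) {A : ι → Matrix n n ℂ}
    (hA : ∀ a, (A a).IsHermitian) : (∑ a, (x a : ℂ) • A a).IsHermitian :=
  isSelfAdjoint_sum _ fun a _ ↦ (hA a).smul (Complex.conj_ofReal _)

omit [Fintype n] in
lemma sum_smul_sub_smul_one [DecidableEq n] {K : Type*} [Field K] (x : ι → K)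
    (A : ι → Matrix n n K) (t : K) :
    ∑ a, x a • (A a - t • 1) = ∑ a, x a • A a - ((∑ a, x a) * t) • 1 := by
  simp only [smul_sub, Finset.sum_sub_distrib, smul_smul, ← Finset.sum_smul, Finset.sum_mul]

lemma re_trace_sum_ofReal_smul_mul_self (x : ι → ℝ) (A : ι → Matrix n n ℂ) :
    ((∑ a, (x a : ℂ) • A a) * ∑ b, (x b : ℂ) • A b).trace.re
      = ∑ a, ∑ b, x a * x b * (A a * A b).trace.re := by
  simp only [Finset.sum_mul_sum, smul_mul_smul_comm, trace_sum, trace_smul, smul_eq_mul,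
    Complex.re_sum, ← Complex.ofReal_mul, Complex.re_ofReal_mul]

lemma trace_sub_smul_one_mul_sub_smul_one [DecidableEq n] {K : Type*} [Field K]
    {A B : Matrix n n K} (hA : A.trace = 1) (hB : B.trace = 1) :
    ((A - (Fintype.card n : K)⁻¹ • 1) * (B - (Fintype.card n : K)⁻¹ • 1)).trace
      = (A * B).trace - (Fintype.card n : K)⁻¹ := by
  simp only [sub_mul, mul_sub, Matrix.smul_mul, Matrix.mul_smul, Matrix.one_mul, Matrix.mul_one,
    smul_smul, trace_sub, trace_smul, trace_one, hA, hB, smul_eq_mul]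
  rcases eq_or_ne (Fintype.card n : K) 0 with h | h
  · simp [h]
  · field_simp
    ring

lemma dotProduct_mulVec_eq_sum_sum (S : Matrix ι ι ℝ) (x : ι → ℝ) :
    x ⬝ᵥ S *ᵥ x = ∑ a, ∑ b, x a * x b * S a b := by
  simp only [dotProduct, mulVec, Finset.mul_sum]
  exact Finset.sum_congr rfl fun a _ ↦ Finset.sum_congr rfl fun b _ ↦ by ring

lemma dotProduct_mulVec_of_eq_gram_add_const (σ : κ → ι → Matrix n n ℂ) (c ξ : ℝ)
    {S : Matrix ι ι ℝ} (hS : ∀ a b, S a b = c * ∑ k, ((σ k a * σ k b).trace).re + ξ ^ 2)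
    (x : ι → ℝ) :
    x ⬝ᵥ S *ᵥ x = c * ∑ k, ((∑ a, (x a : ℂ) • σ k a) * ∑ b, (x b : ℂ) • σ k b).trace.re
      + (ξ * ∑ a, x a) ^ 2 := by
  have hSx : ∀ a b, x a * x b * S a b
      = c * ∑ k, x a * x b * ((σ k a * σ k b).trace).re + ξ ^ 2 * (x a * x b) := by
    intro a b
    rw [hS, ← Finset.mul_sum]
    ring
  simp only [re_trace_sum_ofReal_smul_mul_self]
  rw [dotProduct_mulVec_eq_sum_sum, mul_pow, sq (∑ a, x a), Finset.sum_mul_sum]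
  simp only [hSx, Finset.mul_sum, Finset.sum_add_distrib]
  congr 1
  exact (Finset.sum_congr rfl fun a _ ↦ Finset.sum_comm).trans Finset.sum_comm

theorem posDef_of_eq_gram_add_const (σ : κ → ι → Matrix n n ℂ)
    (hσ : ∀ k a, (σ k a).IsHermitian) {c : ℝ} (hc : 0 < c) (ξ : ℝ) {S : Matrix ι ι ℝ}
    (hS : ∀ a b, S a b = c * ∑ k, ((σ k a * σ k b).trace).re + ξ ^ 2)
    (hker : ∀ x : ι → ℝ, (∀ k, ∑ a, (x a : ℂ) • σ k a = 0) → ξ * ∑ a, x a = 0 → x = 0) :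
    S.PosDef := by
  refine .of_dotProduct_mulVec_pos ?_ fun x hx ↦ ?_
  · ext a b
    simp only [conjTranspose_apply, star_trivial, hS, trace_mul_comm (σ _ a)]
  set N := fun k ↦ ∑ a, (x a : ℂ) • σ k a
  have hN : ∀ k, (N k).IsHermitian := fun k ↦ isHermitian_sum_ofReal_smul x (hσ k)
  have hN_nonneg : ∀ k ∈ Finset.univ, 0 ≤ (N k * N k).trace.re :=
    fun k _ ↦ (hN k).re_trace_mul_self_nonneg
  have hgram_nonneg : 0 ≤ c * ∑ k, (N k * N k).trace.re :=
    mul_nonneg hc.le (Finset.sum_nonneg hN_nonneg)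
  rw [star_trivial, dotProduct_mulVec_of_eq_gram_add_const σ c ξ hS]
  refine lt_of_le_of_ne (add_nonneg hgram_nonneg (sq_nonneg _)) fun h ↦ hx ?_
  obtain ⟨hgram, hconst⟩ := (add_eq_zero_iff_of_nonneg hgram_nonneg (sq_nonneg _)).mp h.symm
  have hN_sq : ∀ k ∈ Finset.univ, (N k * N k).trace.re = 0 :=
    (Finset.sum_eq_zero_iff_of_nonneg hN_nonneg).mp ((mul_eq_zero.mp hgram).resolve_left hc.ne')
  exact hker x (fun k ↦ (hN k).re_trace_mul_self_eq_zero_iff.mp (hN_sq k (Finset.mem_univ k)))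
    (pow_eq_zero_iff two_ne_zero |>.mp hconst)

end Matrix

/-- Positive definiteness of the first-layer covariance of the quantum-classical hybrid
network: with density matrices `ρ^k_{x^a}` on `ℂ^{2^m}`, constant `c > 0`, and
`Σ(a,b) = c Σ_k (Tr(ρ^k_{x^a} ρ^k_{x^b}) − 2^{−m}) + ξ²`, the matrix `Σ` is positive
definite unless there are coefficients `c_a`, not all zero, satisfying (i)
`Σ_a c_a ρ^k_{x^a} = 0` for all `k` and `Σ_a c_a = 0`, or (ii) `ξ = 0`,
`Σ_a c_a ρ^k_{x^a} = I/2^m` for all `k` and `Σ_a c_a = 1`. -/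
theorem qcnn_first_layer_covariance_posDef (m nQ ND : ℕ) (ξ : ℝ) (c : ℝ) (hc : 0 < c)
    (ρ : Fin nQ → Fin ND → Matrix (Fin (2 ^ m)) (Fin (2 ^ m)) ℂ)
    (hρ : ∀ k a, (ρ k a).PosSemidef) (hρtr : ∀ k a, (ρ k a).trace = 1)
    (Smat : Matrix (Fin ND) (Fin ND) ℝ)
    (hS : ∀ a b, Smat a b
      = c * ∑ k, (((ρ k a * ρ k b).trace).re - ((2 : ℝ) ^ m)⁻¹) + ξ ^ 2)
    (hno : ¬ ∃ co : Fin ND → ℝ, co ≠ 0 ∧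
      (((∀ k, ∑ a, (co a : ℂ) • ρ k a = 0) ∧ ∑ a, co a = 0) ∨
        (ξ = 0 ∧ (∀ k, ∑ a, (co a : ℂ) • ρ k a
            = ((2 : ℂ) ^ m)⁻¹ • (1 : Matrix (Fin (2 ^ m)) (Fin (2 ^ m)) ℂ))
          ∧ ∑ a, co a = 1))) :
    Smat.PosDef := by
  have hd : ((Fintype.card (Fin (2 ^ m)) : ℂ))⁻¹ = (((2 : ℝ) ^ m)⁻¹ : ℝ) := by simp
  refine posDef_of_eq_gram_add_const (fun k a ↦ ρ k a - (Fintype.card (Fin (2 ^ m)) : ℂ)⁻¹ • 1)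
    (fun k a ↦ (hρ k a).isHermitian.sub (isHermitian_one.smul (hd ▸ Complex.conj_ofReal _)))
    hc ξ (fun a b ↦ ?_) fun x hx hξs ↦ ?_
  · rw [hS]
    congr 2
    refine Finset.sum_congr rfl fun k _ ↦ ?_
    rw [trace_sub_smul_one_mul_sub_smul_one (hρtr k a) (hρtr k b), Complex.sub_re, hd,
      Complex.ofReal_re]
  by_contra hx0
  apply hno
  have hcomb : ∀ k, ∑ a, (x a : ℂ) • ρ k a = (((∑ a, x a) * ((2 : ℝ) ^ m)⁻¹ : ℝ) : ℂ) • 1 := by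
    intro k
    have := hx k
    rwa [sum_smul_sub_smul_one, sub_eq_zero, hd, ← Complex.ofReal_sum, ← Complex.ofReal_mul] at this
  by_cases hs : ∑ a, x a = 0
  · exact ⟨x, hx0, .inl ⟨fun k ↦ by rw [hcomb, hs, zero_mul, Complex.ofReal_zero, zero_smul], hs⟩⟩
  refine ⟨(∑ a, x a)⁻¹ • x, smul_ne_zero (inv_ne_zero hs) hx0, .inr ⟨?_, fun k ↦ ?_, ?_⟩⟩
  · exact (mul_eq_zero.mp hξs).resolve_right hs
  · simp_rw [Pi.smul_apply, smul_eq_mul, Complex.ofReal_mul, mul_smul, ← Finset.smul_sum, hcomb,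
      smul_smul]
    rw [← Complex.ofReal_mul, inv_mul_cancel_left₀ hs]
    push_cast
    rfl
  · simp only [Pi.smul_apply, smul_eq_mul, ← Finset.mul_sum, inv_mul_cancel₀ hs]
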